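/- arXiv:1912.07992 — 5 statements merged into one kernel-verified Lean document; each statement's English description precedes it below -/
import Mathlib

section
/- Let Σ be an alphabet, M a finite monoid, and k ≥ 0. There is a constant c = k! · |Σ|^{⌈k/2⌉} with the following property. Let a program P over M on Σ^n be a finite sequence of instructions (p_i, f_i) ∈ [n] × M^Σ, i = 1,…,l, and for w ∈ Σ^n let eval_P(w) = f_1(w_{p_1}) f_2(w_{p_2}) ⋯ f_l(w_{p_l}) ∈ M^l viewed as a word over the alphabet M. Then for every word t ∈ M^k there exists a subset I ⊆ [l] with |I| ≤ c · n^{⌈k/2⌉} such that for every I' with I ⊆ I' ⊆ [l] and every w ∈ Σ^n: t is a subword of eval_P(w) if and only if t is a subword of eval_{P[I']}(w), where P[I'] is the subsequence of P consisting of the instructions with index in I'. -/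
/-- The word over `M` obtained by successively evaluating the instructions of the
program `P` on input `w`. -/
def evalWord {n : ℕ} {σ M : Type*} (P : List (Fin n × (σ → M))) (w : Fin n → σ) : List M :=
  P.map (fun ins => ins.2 (w ins.1))

/-- The subsequence of `P` consisting of the entries whose index lies in `S`. -/
def selectIdx {α : Type*} (P : List α) (S : Finset (Fin P.length)) : List α :=
  ((List.finRange P.length).filter (fun i => decide (i ∈ S))).map P.get

/-!
Write `t = u ++ v` with `|u| = ⌈k/2⌉`. Any occurrence of `t` in `eval_P(w)` can be normalised so
that `u` is matched leftmost and `v` rightmost around the split point. The leftmost match of `u`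
only depends on which position `p` and which letter `w p` each matched instruction reads, a guess
in `([n] × Σ)^|u|`, and it uses at most `|u|` instructions. Collecting these instructions over all
guesses, and symmetrically for `v`, gives at most `k · (n |Σ|)^⌈k/2⌉` indices, and any `P[I']`
containing them still contains the normalised occurrence.
-/

open List

section GreedyMatch

variable {α : Type*}

def greedyMatch : List α → List (α → Bool) → List α
  | [], _ => []
  | _, [] => []
  | a :: L, p :: ps => if p a then a :: greedyMatch L ps else greedyMatch L (p :: ps)

theorem length_greedyMatch_le : ∀ (L : List α) (ps : List (α → Bool)),
    (greedyMatch L ps).length ≤ ps.length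
  | [], _ => by simp [greedyMatch]
  | _ :: _, [] => by simp [greedyMatch]
  | a :: L, p :: ps => by
    by_cases h : p a
    · simpa [greedyMatch, h] using length_greedyMatch_le L ps
    · simpa [greedyMatch, h] using length_greedyMatch_le L (p :: ps)

theorem greedyMatch_append_sublist : ∀ {L l₁ l₂ : List α} {ps : List (α → Bool)},
    Forall₂ (fun p a => p a) ps l₁ → l₁ ++ l₂ <+ L →
      Forall₂ (fun p a => p a) ps (greedyMatch L ps) ∧ greedyMatch L ps ++ l₂ <+ L
  | [], _, _, _, hps, hsub => by
    obtain ⟨rfl, rfl⟩ := append_eq_nil_iff.mp (sublist_nil.mp hsub)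
    cases hps
    simp [greedyMatch]
  | _ :: _, _, _, [], hps, hsub => by
    cases hps
    simpa [greedyMatch] using hsub
  | a :: L, _, l₂, p :: ps, hps, hsub => by
    obtain ⟨b, l₁, hpb, hrest, rfl⟩ := forall₂_cons_left_iff.mp hps
    have htail : l₁ ++ l₂ <+ L := by
      rcases hsub with _ | _
      · exact (sublist_cons_self b _).trans ‹_›
      · assumption
    by_cases hpa : p a
    · obtain ⟨h₁, h₂⟩ := greedyMatch_append_sublist hrest htail
      simpa [greedyMatch, hpa] using And.intro h₁ h₂
    · have hsub' : b :: l₁ ++ l₂ <+ L := by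
        rcases hsub with _ | _
        · assumption
        · exact absurd hpb hpa
      obtain ⟨h₁, h₂⟩ := greedyMatch_append_sublist hps hsub'
      simpa [greedyMatch, hpa] using And.intro h₁ (h₂.trans (sublist_cons_self a L))

def greedyMatchRight (L : List α) (ps : List (α → Bool)) : List α :=
  (greedyMatch L.reverse ps.reverse).reverse

theorem length_greedyMatchRight_le (L : List α) (ps : List (α → Bool)) :
    (greedyMatchRight L ps).length ≤ ps.length := by
  simpa [greedyMatchRight] using length_greedyMatch_le L.reverse ps.reverse

theorem append_greedyMatchRight_sublist {L l₁ l₂ : List α} {ps : List (α → Bool)}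
    (hps : Forall₂ (fun p a => p a) ps l₂) (hsub : l₁ ++ l₂ <+ L) :
    Forall₂ (fun p a => p a) ps (greedyMatchRight L ps) ∧ l₁ ++ greedyMatchRight L ps <+ L := by
  obtain ⟨h₁, h₂⟩ := greedyMatch_append_sublist (l₂ := l₁.reverse) (forall₂_reverse_iff.mpr hps)
    (by simpa using hsub.reverse)
  refine ⟨forall₂_reverse_iff.mp (by simpa [greedyMatchRight] using h₁), ?_⟩
  simpa [greedyMatchRight] using h₂.reverse

end GreedyMatch

section Programs

variable {n : ℕ} {σ M : Type*} (P : List (Fin n × (σ → M)))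

def instrValue (w : Fin n → σ) (i : Fin P.length) : M := (P.get i).2 (w (P.get i).1)

theorem evalWord_eq_map_instrValue (w : Fin n → σ) :
    evalWord P w = (finRange P.length).map (instrValue P w) := by
  conv_lhs => rw [evalWord, ← map_get_finRange P, map_map]
  rfl

theorem evalWord_selectIdx (S : Finset (Fin P.length)) (w : Fin n → σ) :
    evalWord (selectIdx P S) w =
      ((finRange P.length).filter (fun i => decide (i ∈ S))).map (instrValue P w) := by
  rw [evalWord, selectIdx, map_map]
  rfl

theorem selectIdx_sublist (S : Finset (Fin P.length)) : selectIdx P S <+ P := by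
  simpa [selectIdx, map_get_finRange] using (filter_sublist (l := finRange P.length)).map P.get

theorem evalWord_selectIdx_sublist (S : Finset (Fin P.length)) (w : Fin n → σ) :
    evalWord (selectIdx P S) w <+ evalWord P w :=
  (selectIdx_sublist P S).map _

variable [DecidableEq M]

/-- `probe P (p, a) m` tests whether an instruction reads position `p` and outputs `m` when
that position carries the letter `a`. -/
def probe (c : Fin n × σ) (m : M) (i : Fin P.length) : Bool :=
  decide ((P.get i).1 = c.1 ∧ (P.get i).2 c.2 = m)

theorem instrValue_eq_of_probe {w : Fin n → σ} {p : Fin n} {m : M} {i : Fin P.length}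
    (h : probe P (p, w p) m i) : instrValue P w i = m := by
  simp only [probe, decide_eq_true_eq] at h
  rw [instrValue, h.1, h.2]

def probesAlong (w : Fin n → σ) (l : List (Fin P.length)) : List (Fin P.length → Bool) :=
  l.map fun i => probe P ((P.get i).1, w (P.get i).1) (instrValue P w i)

theorem forall₂_probesAlong_self (w : Fin n → σ) (l : List (Fin P.length)) :
    Forall₂ (fun p i => p i) (probesAlong P w l) l := by
  simp [probesAlong, forall₂_map_left_iff, forall₂_same, probe, instrValue]

theorem map_instrValue_eq_of_forall₂_probesAlong {w : Fin n → σ} {l l' : List (Fin P.length)}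
    (h : Forall₂ (fun p i => p i) (probesAlong P w l) l') :
    l'.map (instrValue P w) = l.map (instrValue P w) := by
  rw [probesAlong, forall₂_map_left_iff] at h
  induction h with
  | nil => rfl
  | cons hi _ ih => simp [ih, instrValue_eq_of_probe P hi]

variable [Fintype σ]

/-- All indices that the matching rule `sel` selects for some guess of the positions and
letters behind the word `u`. -/
def matchCandidates (sel : List (Fin P.length → Bool) → List (Fin P.length)) (u : List M) :
    Finset (Fin P.length) :=
  Finset.univ.biUnion fun g : List.Vector (Fin n × σ) u.length =>
    (sel (zipWith (probe P) g.toList u)).toFinset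

theorem card_matchCandidates_le {sel : List (Fin P.length → Bool) → List (Fin P.length)}
    (hsel : ∀ ps, (sel ps).length ≤ ps.length) (u : List M) :
    (matchCandidates P sel u).card ≤ (n * Fintype.card σ) ^ u.length * u.length := by
  calc (matchCandidates P sel u).card
      ≤ Fintype.card (List.Vector (Fin n × σ) u.length) * u.length := by
        refine Finset.card_biUnion_le_card_mul _ _ _ fun g _ => ?_
        refine (toFinset_card_le _).trans ((hsel _).trans ?_)
        simp
    _ = (n * Fintype.card σ) ^ u.length * u.length := by simp

theorem subset_matchCandidates (sel : List (Fin P.length → Bool) → List (Fin P.length))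
    (w : Fin n → σ) (l : List (Fin P.length)) :
    ∀ i ∈ sel (probesAlong P w l), i ∈ matchCandidates P sel (l.map (instrValue P w)) := by
  intro i hi
  refine Finset.mem_biUnion.mpr
    ⟨⟨l.map fun j => ((P.get j).1, w (P.get j).1), by simp⟩, Finset.mem_univ _, ?_⟩
  simpa [zipWith_map, zipWith_self, probesAlong] using hi

theorem append_sublist_evalWord_selectIdx {u v : List M} {S : Finset (Fin P.length)}
    (hS : matchCandidates P (greedyMatch (finRange P.length)) u ∪
      matchCandidates P (greedyMatchRight (finRange P.length)) v ⊆ S)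
    {w : Fin n → σ} (h : u ++ v <+ evalWord P w) : u ++ v <+ evalWord (selectIdx P S) w := by
  rw [evalWord_eq_map_instrValue, sublist_map_iff] at h
  obtain ⟨l, hl, huv⟩ := h
  obtain ⟨l₁, l₂, rfl, rfl, rfl⟩ := map_eq_append_iff.mp huv.symm
  obtain ⟨hg₁, hsub₁⟩ := greedyMatch_append_sublist (forall₂_probesAlong_self P w l₁) hl
  obtain ⟨hg₂, hsub₂⟩ := append_greedyMatchRight_sublist (forall₂_probesAlong_self P w l₂) hsub₁
  set g := greedyMatch (finRange P.length) (probesAlong P w l₁) ++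
    greedyMatchRight (finRange P.length) (probesAlong P w l₂)
  have hkeep : g.filter (fun i => decide (i ∈ S)) = g := by
    refine filter_eq_self.mpr fun i hi => decide_eq_true (hS ?_)
    rcases mem_append.mp hi with hi | hi
    · exact Finset.mem_union_left _ (subset_matchCandidates P _ w l₁ i hi)
    · exact Finset.mem_union_right _ (subset_matchCandidates P _ w l₂ i hi)
  rw [evalWord_selectIdx, ← map_instrValue_eq_of_forall₂_probesAlong P hg₁,
    ← map_instrValue_eq_of_forall₂_probesAlong P hg₂, ← map_append]
  exact (hkeep ▸ hsub₂.filter _).map _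

end Programs

theorem pow_mul_le_pow_mul_of_le {B a b : ℕ} (hab : a ≤ b) : B ^ a * a ≤ B ^ b * a := by
  rcases Nat.eq_zero_or_pos a with rfl | ha
  · simp
  rcases Nat.eq_zero_or_pos B with rfl | hB
  · simp [zero_pow ha.ne', zero_pow (ha.trans_le hab).ne']
  · exact Nat.mul_le_mul_right _ (Nat.pow_le_pow_right hB hab)

theorem stmt_4_general {σ M : Type*} [Fintype σ] (k n : ℕ)
    (P : List (Fin n × (σ → M))) (t : List M) (ht : t.length = k) :
    ∃ I : Finset (Fin P.length),
      I.card ≤ k.factorial * (Fintype.card σ) ^ ((k + 1) / 2) * n ^ ((k + 1) / 2) ∧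
      ∀ I' : Finset (Fin P.length), I ⊆ I' → ∀ w : Fin n → σ,
        (t.Sublist (evalWord P w) ↔ t.Sublist (evalWord (selectIdx P I') w)) := by
  classical
  set m := (k + 1) / 2
  set B := n * Fintype.card σ
  have hu : (t.take m).length = m := by simp [ht]; omega
  have hv : (t.drop m).length = k - m := by simp [ht]
  refine ⟨matchCandidates P (greedyMatch (finRange P.length)) (t.take m) ∪
    matchCandidates P (greedyMatchRight (finRange P.length)) (t.drop m), ?_, fun I' hI' w => ?_⟩
  · calc _ ≤ B ^ m * m + B ^ (k - m) * (k - m) := by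
          refine (Finset.card_union_le _ _).trans (add_le_add ?_ ?_)
          · simpa [hu] using card_matchCandidates_le P (length_greedyMatch_le _) (t.take m)
          · simpa [hv] using card_matchCandidates_le P (length_greedyMatchRight_le _) (t.drop m)
      _ ≤ B ^ m * m + B ^ m * (k - m) :=
          Nat.add_le_add_left (pow_mul_le_pow_mul_of_le (by omega)) _
      _ = B ^ m * k := by rw [← Nat.mul_add]; congr 1; omega
      _ ≤ B ^ m * k.factorial := Nat.mul_le_mul_left _ k.self_le_factorial
      _ = k.factorial * Fintype.card σ ^ m * n ^ m := by rw [mul_pow]; ring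
  · refine ⟨fun h => ?_, fun h => h.trans (evalWord_selectIdx_sublist P I' w)⟩
    rw [← take_append_drop m t] at h ⊢
    exact append_sublist_evalWord_selectIdx P hI' h

theorem stmt_4 {σ M : Type*} [Fintype σ] [Monoid M] (k n : ℕ)
    (P : List (Fin n × (σ → M))) (t : List M) (ht : t.length = k) :
    ∃ I : Finset (Fin P.length),
      I.card ≤ k.factorial * (Fintype.card σ) ^ ((k + 1) / 2) * n ^ ((k + 1) / 2) ∧
      ∀ I' : Finset (Fin P.length), I ⊆ I' → ∀ w : Fin n → σ,
        (t.Sublist (evalWord P w) ↔ t.Sublist (evalWord (selectIdx P I') w)) :=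
  stmt_4_general k n P t ht
end

section
/- Let Σ be an alphabet and u ∈ Σ^+. For every α ≥ 1, every word w that contains u^α as a subword but does not contain u^{α+1} as a subword can be written as w = (∏_{i=1}^{α} ∏_{j=1}^{|u|} v_{i,j} u_j) · y, where each v_{i,j} is a word over Σ avoiding the letter u_j, and y is a word such that for some i ∈ [|u|], y ∈ (∏_{j=1}^{i−1} (Σ∖{u_j})^* u_j) · (Σ∖{u_i})^*; in particular y does not contain u as a subword. -/
/-!
Embed `u^a` into `w` greedily, always matching the next letter at its first occurrence; the
letters skipped before each match then avoid the matched letter, which gives the blocks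
`v i j`. The remainder `y` cannot contain `u`, since otherwise `u^(a+1)` would embed into `w`.
Embedding the longest possible prefix `u₁ ⋯ u_{i-1}` of `u` greedily into `y` in the same way
leaves a tail without the letter `u_i`.
-/

/-- `u^l`: the concatenation of `l` copies of the word `u`. -/
def wpow {α : Type*} (u : List α) (l : ℕ) : List α := (List.replicate l u).flatten

section

variable {α : Type*}

theorem flatMap_finRange_succ {n : ℕ} (f : Fin (n + 1) → List α) :
    (List.finRange (n + 1)).flatMap f = f 0 ++ (List.finRange n).flatMap fun i => f i.succ := by
  simp [List.finRange_succ, List.flatMap_map]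

def withGaps (s : List α) (v : Fin s.length → List α) : List α :=
  (List.finRange s.length).flatMap fun j => v j ++ [s.get j]

@[simp]
theorem withGaps_cons (c : α) (s : List α) (v : Fin (s.length + 1) → List α) :
    withGaps (c :: s) v = v 0 ++ c :: withGaps s fun j => v j.succ := by
  simp [withGaps, flatMap_finRange_succ]

theorem sublist_withGaps : ∀ (s : List α) (v : Fin s.length → List α), s.Sublist (withGaps s v)
  | [], _ => List.nil_sublist _
  | c :: s, v => by
    rw [withGaps_cons]
    exact ((sublist_withGaps s _).cons_cons c).trans (List.sublist_append_right _ _)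

theorem exists_eq_append_cons_of_cons_sublist {c : α} {x : List α} :
    ∀ {w : List α}, (c :: x).Sublist w → ∃ p r, w = p ++ c :: r ∧ c ∉ p ∧ x.Sublist r
  | [], h => by simp at h
  | _ :: w, .cons_cons _ h => ⟨[], w, rfl, List.not_mem_nil, h⟩
  | b :: _, .cons _ h => by
    obtain ⟨p, r, rfl, hcp, hxr⟩ := exists_eq_append_cons_of_cons_sublist h
    by_cases hbc : b = c
    · subst hbc
      exact ⟨[], p ++ b :: r, rfl, List.not_mem_nil,
        hxr.trans ((List.sublist_cons_self b r).trans (List.sublist_append_right p _))⟩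
    · exact ⟨b :: p, r, rfl, by simp [Ne.symm hbc, hcp], hxr⟩

theorem exists_withGaps_of_append_sublist :
    ∀ {s t w : List α}, (s ++ t).Sublist w →
      ∃ (v : Fin s.length → List α) (r : List α),
        w = withGaps s v ++ r ∧ (∀ j, s.get j ∉ v j) ∧ t.Sublist r
  | [], _, w, h => ⟨Fin.elim0, w, rfl, fun j => j.elim0, h⟩
  | c :: s, t, w, h => by
    obtain ⟨p, w', rfl, hcp, hw'⟩ := exists_eq_append_cons_of_cons_sublist h
    obtain ⟨v, r, rfl, hv, htr⟩ := exists_withGaps_of_append_sublist hw'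
    refine ⟨Fin.cons p v, r, by simp, fun j => ?_, htr⟩
    cases j using Fin.cases with
    | zero => exact hcp
    | succ j => simpa using hv j

theorem wpow_succ (u : List α) (a : ℕ) : wpow u (a + 1) = u ++ wpow u a := by
  simp [wpow, List.replicate_succ]

theorem wpow_succ' (u : List α) (a : ℕ) : wpow u (a + 1) = wpow u a ++ u := by
  simp [wpow, List.replicate_succ']

theorem wpow_sublist_flatMap_withGaps (u : List α) :
    ∀ (a : ℕ) (v : Fin a → Fin u.length → List α),
      (wpow u a).Sublist ((List.finRange a).flatMap fun i => withGaps u (v i))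
  | 0, _ => by simp [wpow]
  | a + 1, v => by
    rw [wpow_succ, flatMap_finRange_succ]
    exact (sublist_withGaps u _).append (wpow_sublist_flatMap_withGaps u a _)

theorem exists_flatMap_withGaps_of_wpow_append_sublist (u : List α) :
    ∀ (a : ℕ) {t w : List α}, (wpow u a ++ t).Sublist w →
      ∃ (v : Fin a → Fin u.length → List α) (r : List α),
        w = ((List.finRange a).flatMap fun i => withGaps u (v i)) ++ r ∧
          (∀ i j, u.get j ∉ v i j) ∧ t.Sublist r
  | 0, _, w, h => ⟨Fin.elim0, w, rfl, fun i => i.elim0, by simpa [wpow] using h⟩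
  | a + 1, t, w, h => by
    rw [wpow_succ, List.append_assoc] at h
    obtain ⟨v₀, w', rfl, hv₀, hw'⟩ := exists_withGaps_of_append_sublist h
    obtain ⟨v, r, rfl, hv, htr⟩ := exists_flatMap_withGaps_of_wpow_append_sublist u a hw'
    refine ⟨Fin.cons v₀ v, r, by simp [flatMap_finRange_succ], fun i j => ?_, htr⟩
    cases i using Fin.cases with
    | zero => exact hv₀ j
    | succ i => exact hv i j

theorem exists_take_flatMap_of_not_sublist :
    ∀ {u y : List α}, ¬ u.Sublist y →
      ∃ (i : Fin u.length) (z : Fin u.length → List α),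
        (∀ j ≤ i, u.get j ∉ z j) ∧
          y = (((List.finRange u.length).take i).flatMap fun j => z j ++ [u.get j]) ++ z i
  | [], _, h => absurd (List.nil_sublist _) h
  | c :: u, y, h => by
    by_cases hcy : c ∈ y
    · obtain ⟨p, y', rfl, hcp, -⟩ :=
        exists_eq_append_cons_of_cons_sublist (List.singleton_sublist.mpr hcy)
      have hu : ¬ u.Sublist y' := fun hu =>
        h ((hu.cons_cons c).trans (List.sublist_append_right p _))
      obtain ⟨i, z, hz, rfl⟩ := exists_take_flatMap_of_not_sublist hu
      refine ⟨i.succ, Fin.cons p z, fun j hj => ?_, ?_⟩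
      · cases j using Fin.cases with
        | zero => exact hcp
        | succ j => simpa using hz j (Fin.succ_le_succ_iff.mp hj)
      · simp [List.finRange_succ, List.flatMap_map, ← List.map_take]
    · exact ⟨0, fun _ => y, fun j hj => by simpa [Fin.le_zero_iff.mp hj] using hcy, by simp⟩

end

theorem stmt_8_general {α : Type*} (u : List α) (a : ℕ)
    (w : List α) (h1 : (wpow u a).Sublist w) (h2 : ¬ (wpow u (a + 1)).Sublist w) :
    ∃ (v : Fin a → Fin u.length → List α) (y : List α),
      w = ((List.finRange a).flatMap fun i =>
            (List.finRange u.length).flatMap fun j => v i j ++ [u.get j]) ++ y ∧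
      (∀ i j, u.get j ∉ v i j) ∧
      (∃ (i : Fin u.length) (z : Fin u.length → List α),
        (∀ j : Fin u.length, j ≤ i → u.get j ∉ z j) ∧
        y = (((List.finRange u.length).take i.val).flatMap fun j => z j ++ [u.get j])
              ++ z i) ∧
      ¬ u.Sublist y := by
  obtain ⟨v, y, hw, hv, -⟩ :=
    exists_flatMap_withGaps_of_wpow_append_sublist u a (t := []) (by simpa using h1)
  have hy : ¬ u.Sublist y := fun hy => h2 <| by
    rw [wpow_succ', hw]
    exact (wpow_sublist_flatMap_withGaps u a v).append hy
  exact ⟨v, y, hw, hv, exists_take_flatMap_of_not_sublist hy, hy⟩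

theorem stmt_8 {α : Type*} (u : List α) (hu : u ≠ []) (a : ℕ) (ha : 1 ≤ a)
    (w : List α) (h1 : (wpow u a).Sublist w) (h2 : ¬ (wpow u (a + 1)).Sublist w) :
    ∃ (v : Fin a → Fin u.length → List α) (y : List α),
      w = ((List.finRange a).flatMap fun i =>
            (List.finRange u.length).flatMap fun j => v i j ++ [u.get j]) ++ y ∧
      (∀ i j, u.get j ∉ v i j) ∧
      (∃ (i : Fin u.length) (z : Fin u.length → List α),
        (∀ j : Fin u.length, j ≤ i → u.get j ∉ z j) ∧
        y = (((List.finRange u.length).take i.val).flatMap fun j => z j ++ [u.get j])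
              ++ z i) ∧
      ¬ u.Sublist y :=
  stmt_8_general u a w h1 h2
end

section
/- Let Σ be an alphabet and u ∈ Σ^+ a word whose letters are pairwise distinct, with |u| ≥ 1. Suppose z is a word containing u^α as a subword but not u^{α+1} as a subword (α ≥ 1), written as z = (∏_{i=1}^{α} ∏_{j=1}^{|u|} v_{i,j} u_j) y with each v_{i,j} avoiding the letter u_j and y not containing u as a subword. If z contains u as a factor, then there exists β ∈ [α] such that the block ∏_{j=1}^{|u|} v_{β,j} u_j already contains u as a factor. -/
namespace List

variable {α ι : Type*}

theorem getLast?_flatMap_append_singleton (l : List ι) (f : ι → List α) (g : ι → α) :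
    (l.flatMap fun i => f i ++ [g i]).getLast? = (l.map g).getLast? := by
  induction l using List.reverseRecOn <;> simp [List.flatMap_append]

theorem Nodup.infix_or_infix_of_infix_append {u b w : List α} (hnd : u.Nodup)
    (hb : b.getLast? = u.getLast?) (h : u <:+: b ++ w) : u <:+: b ∨ u <:+: w := by
  obtain ⟨s, t, h⟩ := h
  rw [append_assoc, append_eq_append_iff] at h
  rcases h with ⟨p, rfl, hut⟩ | ⟨c, rfl, rfl⟩
  · rw [append_eq_append_iff] at hut
    rcases hut with ⟨d, rfl, rfl⟩ | ⟨d, rfl, rfl⟩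
    · exact .inl ⟨s, d, by simp⟩
    · rcases hp : p.getLast? with _ | x
      · obtain rfl := getLast?_eq_none_iff.mp hp
        exact .inr ⟨[], t, by simp⟩
      rcases hd : d.getLast? with _ | x'
      · obtain rfl := getLast?_eq_none_iff.mp hd
        exact .inl ⟨s, [], by simp⟩
      -- a straddling occurrence `u = p ++ d`: the last letter of `u` ends both `p` and `d`
      simp only [getLast?_append, hp, hd, Option.some_or, Option.some.injEq] at hb
      exact absurd (hb ▸ mem_of_getLast? hd) (disjoint_of_nodup_append hnd (mem_of_getLast? hp))
  · exact .inr ⟨c, t, by simp⟩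

theorem Nodup.exists_infix_or_infix_of_infix_flatten_append {u y : List α} (hnd : u.Nodup)
    {L : List (List α)} (hL : ∀ b ∈ L, b.getLast? = u.getLast?) (h : u <:+: L.flatten ++ y) :
    (∃ b ∈ L, u <:+: b) ∨ u <:+: y := by
  induction L with
  | nil => exact .inr (by simpa using h)
  | cons b L ih =>
    rw [flatten_cons, append_assoc] at h
    rcases hnd.infix_or_infix_of_infix_append (hL b mem_cons_self) h with hb | hL'
    · exact .inl ⟨b, mem_cons_self, hb⟩
    · rcases ih (fun c hc => hL c (mem_cons_of_mem b hc)) hL' with ⟨c, hc, hu⟩ | hy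
      · exact .inl ⟨c, mem_cons_of_mem b hc, hu⟩
      · exact .inr hy

end List

theorem stmt_9_general {α : Type*} (u : List α) (hnd : u.Nodup)
    (a : ℕ)
    (v : Fin a → Fin u.length → List α) (y : List α)
    (hy : ¬ u.Sublist y)
    (z : List α)
    (hz : z = ((List.finRange a).flatMap fun i =>
            (List.finRange u.length).flatMap fun j => v i j ++ [u.get j]) ++ y)
    (hfac : u <:+: z) :
    ∃ β : Fin a,
      u <:+: ((List.finRange u.length).flatMap fun j => v β j ++ [u.get j]) := by
  rw [hz, List.flatMap_def] at hfac
  have hblocks : ∀ b ∈ (List.finRange a).map fun i =>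
      (List.finRange u.length).flatMap fun j => v i j ++ [u.get j], b.getLast? = u.getLast? := by
    intro b hb
    obtain ⟨i, -, rfl⟩ := List.mem_map.mp hb
    rw [List.getLast?_flatMap_append_singleton, List.map_get_finRange]
  rcases hnd.exists_infix_or_infix_of_infix_flatten_append hblocks hfac with ⟨_, hb, hub⟩ | hy'
  · obtain ⟨β, -, rfl⟩ := List.mem_map.mp hb
    exact ⟨β, hub⟩
  · exact absurd hy'.sublist hy

theorem stmt_9 {α : Type*} (u : List α) (hu : u ≠ []) (hnd : u.Nodup)
    (a : ℕ) (ha : 1 ≤ a)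
    (v : Fin a → Fin u.length → List α) (y : List α)
    (hv : ∀ i j, u.get j ∉ v i j) (hy : ¬ u.Sublist y)
    (z : List α)
    (hz : z = ((List.finRange a).flatMap fun i =>
            (List.finRange u.length).flatMap fun j => v i j ++ [u.get j]) ++ y)
    (h1 : (wpow u a).Sublist z) (h2 : ¬ (wpow u (a + 1)).Sublist z)
    (hfac : u <:+: z) :
    ∃ β : Fin a,
      u <:+: ((List.finRange u.length).flatMap fun j => v β j ++ [u.get j]) :=
  stmt_9_general u hnd a v y hy z hz hfac
end

section
/- Let Σ be an alphabet and L ⊆ Σ*. Suppose there exist u_0, u_n ∈ Σ*, n ≥ 2, nonempty A_1,…,A_n ⊆ Σ, and for each i ∈ [n−1] a word u_i ∈ Σ^+ with alphabet(u_i) ⊄ A_i and alphabet(u_i) ⊄ A_{i+1}, such that L = u_0 A_1* u_1 A_2* u_2 ⋯ u_{n−1} A_n* u_n. Then every w ∈ L of the form w = u_0 α_1 u_1 α_2 ⋯ u_{n−1} α_n u_n with α_i ∈ A_i* satisfies: w does not contain u_0 u_1 ⋯ u_{i−1} · c · u_i ⋯ u_{n−1} u_n as a 'factor-chain' in the sense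 that w ∉ ⟨u_0, u_1, …, u_{i−1}, c, u_i, …, u_{n−1}, u_n⟩_2 for every i ∈ [n] and every letter c ∈ Σ∖A_i. -/
/-- Concatenation of two languages. -/
def lconc {α : Type*} (L K : Set (List α)) : Set (List α) :=
  {w | ∃ x ∈ L, ∃ y ∈ K, w = x ++ y}

/-- `⟨u⟩_l`: words containing `u` as a factor or `u^l` as a subword. -/
def cc {α : Type*} (u : List α) (l : ℕ) : Set (List α) :=
  {w | u <:+: w ∨ (wpow u l).Sublist w}

/-- Concatenation of a list of languages. -/
def chainConc {α : Type*} (Ls : List (Set (List α))) : Set (List α) :=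
  Ls.foldr lconc {[]}

/-!
Write `w = u₀ α₁ u₁ ⋯ αₙ uₙ`. Since `uⱼ` has a letter outside `Aⱼ ⊇ alphabet(αⱼ)`, the only
occurrence of `uⱼ` in `αⱼ uⱼ` is the suffix and `uⱼ²` is not a subword of `αⱼ uⱼ`. Hence, scanning
a factorisation `w = x₀ ⋯ x_{i-1} y zᵢ ⋯ zₙ` with `xⱼ ∈ ⟨uⱼ⟩₂` from the left, each `xⱼ` ends at or
after the end of the `uⱼ` in `w`; symmetrically (using that `uⱼ` has a letter outside `Aⱼ₊₁`)
each `zⱼ` starts at or before the `uⱼ` in `w`. So `y ∈ ⟨c⟩₂` is a factor of `αᵢ ∈ Aᵢ*`, and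
contains `c ∉ Aᵢ`.
-/

open List

section Words

variable {α : Type*}

lemma reverse_wpow (v : List α) (l : ℕ) : (wpow v l).reverse = wpow v.reverse l := by
  simp [wpow, reverse_flatten]

lemma append_sublist_wpow (v : List α) {l : ℕ} (hl : 2 ≤ l) : v ++ v <+ wpow v l := by
  obtain ⟨k, rfl⟩ := Nat.exists_eq_add_of_le' hl
  simp [wpow, replicate_succ, ← append_assoc]

lemma reverse_mem_cc {x v : List α} {l : ℕ} (hx : x ∈ cc v l) : x.reverse ∈ cc v.reverse l := by
  rcases hx with hx | hx
  · exact Or.inl (reverse_infix.mpr hx)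
  · exact Or.inr (reverse_wpow v l ▸ hx.reverse)

lemma mem_of_mem_cc_singleton {x : List α} {c : α} {l : ℕ} (hl : l ≠ 0)
    (hx : x ∈ cc [c] l) : c ∈ x := by
  obtain ⟨k, rfl⟩ := Nat.exists_eq_succ_of_ne_zero hl
  rcases hx with hx | hx
  · exact hx.subset (mem_singleton_self c)
  · exact hx.subset (by simp [wpow, replicate_succ])

/-- `v` is a prefix of a power of `a`. -/
lemma subset_of_append_eq_append {a v e : List α} (ha : a ≠ []) (h : v ++ e = a ++ v) :
    v ⊆ a := by
  induction hlen : v.length using Nat.strong_induction_on generalizing v e with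
  | _ k ih =>
    rcases append_eq_append_iff.mp h with ⟨a', rfl, -⟩ | ⟨v', rfl, hv'⟩
    · exact subset_append_left v a'
    · have hlt : v'.length < k := by
        have : a.length ≠ 0 := by simpa using ha
        rw [length_append] at hlen; omega
      have hv'a : v' ⊆ a := ih _ hlt (e := e) (by rw [← hv']) rfl
      exact append_subset.mpr ⟨Subset.refl a, hv'a⟩

lemma eq_nil_of_append_eq_append_append {β v d e : List α} (hv : ∃ a ∈ v, a ∉ β)
    (h : β ++ v = d ++ (v ++ e)) : e = [] := by
  obtain ⟨a, hav, haβ⟩ := hv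
  rcases append_eq_append_iff.mp h with ⟨a', rfl, h'⟩ | ⟨c', rfl, h'⟩
  · have := congrArg length h'
    simp only [length_append] at this
    exact length_eq_zero_iff.mp (by omega)
  · by_contra he
    have hc' : c' ≠ [] := by rintro rfl; exact he (by simpa using h')
    exact haβ (mem_append_right d (subset_of_append_eq_append hc' h' hav))

lemma not_append_sublist_append {β v : List α} (hv : ∃ a ∈ v, a ∉ β) :
    ¬ v ++ v <+ β ++ v := by
  intro h
  obtain ⟨a, hav, haβ⟩ := hv
  obtain ⟨l₁, l₂, heq, h₁, h₂⟩ := sublist_append_iff.mp h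
  have hpre : v <+: l₁ := by
    refine prefix_of_prefix_length_le (prefix_append v v) (heq ▸ prefix_append l₁ l₂) ?_
    have := congrArg length heq
    have := h₂.length_le
    rw [length_append, length_append] at *; omega
  exact haβ (h₁.subset (hpre.subset hav))

lemma eq_nil_of_mem_cc_of_append_suffix {β v x s : List α} {l : ℕ} (hl : 2 ≤ l)
    (hv : ∃ a ∈ v, a ∉ β) (hx : x ∈ cc v l) (h : x ++ s <:+ β ++ v) : s = [] := by
  rcases hx with ⟨p, q, rfl⟩ | hx
  · obtain ⟨d, hd⟩ := h
    have := eq_nil_of_append_eq_append_append (d := d ++ p) (e := q ++ s) hv (by simp [← hd])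
    exact (append_eq_nil_iff.mp this).2
  · exact absurd ((append_sublist_wpow v hl).trans
      (hx.trans ((sublist_append_left x s).trans h.sublist))) (not_append_sublist_append hv)

lemma suffix_of_mem_cc_of_append_suffix {β v x r Q : List α} {l : ℕ} (hl : 2 ≤ l)
    (hv : ∃ a ∈ v, a ∉ β) (hx : x ∈ cc v l) (h : x ++ r <:+ β ++ v ++ Q) : r <:+ Q := by
  have hr : r <:+ β ++ v ++ Q := (suffix_append x r).trans h
  rcases le_or_gt r.length Q.length with hlen | hlen
  · exact suffix_of_suffix_length_le hr (suffix_append _ Q) hlen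
  · obtain ⟨s, rfl⟩ := suffix_of_suffix_length_le (suffix_append _ Q) hr hlen.le
    rw [← append_assoc, suffix_append_self_iff] at h
    simp [eq_nil_of_mem_cc_of_append_suffix hl hv hx h]

lemma prefix_of_mem_cc_of_append_prefix {β v x r Q : List α} {l : ℕ} (hl : 2 ≤ l)
    (hv : ∃ a ∈ v, a ∉ β) (hx : x ∈ cc v l) (h : r ++ x <+: Q ++ v ++ β) : r <+: Q := by
  rw [← reverse_suffix] at h ⊢
  simp only [reverse_append, ← append_assoc] at h
  exact suffix_of_mem_cc_of_append_suffix hl (by simpa using hv) (reverse_mem_cc hx) h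

lemma infix_of_append_append_eq {F y Z P m S : List α} (h : F ++ y ++ Z = P ++ m ++ S)
    (hsuf : y ++ Z <:+ m ++ S) (hpre : F ++ y <+: P ++ m) : y <:+: m := by
  obtain ⟨d, hd⟩ := hsuf
  have hF : F = P ++ d := by
    rw [append_assoc P, ← hd] at h
    exact append_cancel_right (by simpa only [append_assoc] using h)
  rw [hF, append_assoc] at hpre
  obtain ⟨t, ht⟩ := (prefix_append_right_inj P).mp hpre
  exact ⟨d, t, ht⟩

end Words

section Chains

variable {α : Type*}

lemma mem_chainConc_cons {L : Set (List α)} {Ls : List (Set (List α))} {w : List α} :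
    w ∈ chainConc (L :: Ls) ↔ ∃ x ∈ L, ∃ y ∈ chainConc Ls, w = x ++ y :=
  Iff.rfl

lemma mem_chainConc_append {Ls Ks : List (Set (List α))} {w : List α} :
    w ∈ chainConc (Ls ++ Ks) ↔ ∃ x ∈ chainConc Ls, ∃ y ∈ chainConc Ks, w = x ++ y := by
  induction Ls generalizing w with
  | nil =>
    refine ⟨fun h => ⟨[], rfl, w, h, rfl⟩, ?_⟩
    rintro ⟨x, rfl, y, hy, rfl⟩
    exact hy
  | cons L Ls ih =>
    constructor
    · rintro ⟨x, hx, y, hy, rfl⟩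
      obtain ⟨y₁, hy₁, y₂, hy₂, rfl⟩ := ih.mp hy
      exact ⟨x ++ y₁, ⟨x, hx, y₁, hy₁, rfl⟩, y₂, hy₂, (append_assoc _ _ _).symm⟩
    · rintro ⟨_, ⟨x₁, hx₁, x₂, hx₂, rfl⟩, y, hy, rfl⟩
      exact ⟨x₁, hx₁, x₂ ++ y, ih.mpr ⟨x₂, hx₂, y, hy, rfl⟩, append_assoc _ _ _⟩

lemma suffix_of_mem_chainConc_of_append_suffix {l : ℕ} (hl : 2 ≤ l)
    (bs : List (List α × List α)) (hbs : ∀ b ∈ bs, ∃ a ∈ b.2, a ∉ b.1) {F r Q : List α}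
    (hF : F ∈ chainConc (bs.map fun b => cc b.2 l))
    (h : F ++ r <:+ bs.flatMap (fun b => b.1 ++ b.2) ++ Q) : r <:+ Q := by
  induction bs generalizing F with
  | nil =>
    obtain rfl : F = [] := hF
    simpa using h
  | cons b bs ih =>
    obtain ⟨x, hx, F', hF', rfl⟩ := mem_chainConc_cons.mp hF
    refine ih (fun b' hb' => hbs b' (mem_cons_of_mem b hb')) hF' ?_
    refine suffix_of_mem_cc_of_append_suffix hl (hbs b mem_cons_self) hx ?_
    simpa only [flatMap_cons, append_assoc] using h

lemma prefix_of_mem_chainConc_of_append_prefix {l : ℕ} (hl : 2 ≤ l)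
    (bs : List (List α × List α)) (hbs : ∀ b ∈ bs, ∃ a ∈ b.1, a ∉ b.2) {Z r Q : List α}
    (hZ : Z ∈ chainConc (bs.map fun b => cc b.1 l))
    (h : r ++ Z <+: Q ++ bs.flatMap (fun b => b.1 ++ b.2)) : r <+: Q := by
  induction bs generalizing Z r Q with
  | nil =>
    obtain rfl : Z = [] := hZ
    simpa using h
  | cons b bs ih =>
    obtain ⟨x, hx, Z', hZ', rfl⟩ := mem_chainConc_cons.mp hZ
    refine prefix_of_mem_cc_of_append_prefix hl (hbs b mem_cons_self) hx ?_
    refine ih (fun b' hb' => hbs b' (mem_cons_of_mem b hb')) hZ' ?_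
    simpa only [flatMap_cons, append_assoc] using h

lemma mem_of_mem_chainConc_append_cons_append {l : ℕ} (hl : 2 ≤ l)
    {bs bs' : List (List α × List α)} (hbs : ∀ b ∈ bs, ∃ a ∈ b.2, a ∉ b.1)
    (hbs' : ∀ b ∈ bs', ∃ a ∈ b.1, a ∉ b.2) {m : List α} {c : α}
    (h : bs.flatMap (fun b => b.1 ++ b.2) ++ m ++ bs'.flatMap (fun b => b.1 ++ b.2) ∈
      chainConc (bs.map (fun b => cc b.2 l) ++ cc [c] l :: bs'.map (fun b => cc b.1 l))) :
    c ∈ m := by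
  obtain ⟨F, hF, _, ⟨y, hy, Z, hZ, rfl⟩, hFyZ⟩ := mem_chainConc_append.mp h
  rw [append_assoc] at hFyZ
  have hym : y <:+: m := infix_of_append_append_eq (by simpa only [append_assoc] using hFyZ.symm)
    (suffix_of_mem_chainConc_of_append_suffix hl bs hbs hF (by rw [hFyZ]))
    (prefix_of_mem_chainConc_of_append_prefix hl bs' hbs' hZ
      (by rw [append_assoc, ← hFyZ, append_assoc]))
  exact hym.subset (mem_of_mem_cc_singleton (by omega) hy)

end Chains

lemma append_flatMap_range {α : Type*} (f g : ℕ → List α) (m : ℕ) :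
    g 0 ++ (range m).flatMap (fun j => f j ++ g (j + 1)) =
      (range m).flatMap (fun j => g j ++ f j) ++ g m := by
  induction m with
  | zero => simp
  | succ m ih => simp [range_succ, ← append_assoc, ih]

lemma append_flatMap_range_eq {α : Type*} (u al : ℕ → List α) {n i : ℕ} (hi : 1 ≤ i)
    (hin : i ≤ n) :
    u 0 ++ (range n).flatMap (fun j => al (j + 1) ++ u (j + 1)) =
      (u 0 ++ (range (i - 1)).flatMap (fun j => al (j + 1) ++ u (j + 1))) ++ al i ++
        ((range (n - i)).flatMap (fun j => u (i + j) ++ al (i + j + 1)) ++ u n) := by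
  obtain ⟨k, rfl⟩ := Nat.exists_eq_add_of_le' hi
  obtain ⟨m, rfl⟩ := Nat.exists_eq_add_of_le hin
  have := append_flatMap_range (fun j => al (k + 1 + j + 1)) (fun j => u (k + 1 + j)) m
  simp only [Nat.add_sub_cancel, Nat.add_sub_cancel_left, range_add, range_succ, flatMap_append,
    flatMap_map, ← this]
  simp [append_assoc, Nat.add_assoc]

section Blocks

variable {α : Type*} (u al : ℕ → List α)

/-- `u₀` becomes a block with empty `β`, which has a letter outside `β` exactly when `u₀ ≠ []`. -/
def headBlocks (k : ℕ) : List (List α × List α) :=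
  (if u 0 = [] then [] else [([], u 0)]) ++ (range k).map fun j => (al (j + 1), u (j + 1))

def tailBlocks (i n : ℕ) : List (List α × List α) :=
  (range (n - i)).map (fun j => (u (i + j), al (i + j + 1))) ++
    (if u n = [] then [] else [(u n, [])])

lemma flatMap_headBlocks (k : ℕ) :
    (headBlocks u al k).flatMap (fun b => b.1 ++ b.2) =
      u 0 ++ (range k).flatMap (fun j => al (j + 1) ++ u (j + 1)) := by
  unfold headBlocks
  split_ifs <;> simp [*, flatMap_map]

lemma flatMap_tailBlocks (i n : ℕ) :
    (tailBlocks u al i n).flatMap (fun b => b.1 ++ b.2) =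
      (range (n - i)).flatMap (fun j => u (i + j) ++ al (i + j + 1)) ++ u n := by
  unfold tailBlocks
  split_ifs <;> simp [*, flatMap_map]

variable {u al}

lemma exists_mem_not_mem_of_mem_headBlocks {k : ℕ}
    (h : ∀ j < k, ∃ x ∈ u (j + 1), x ∉ al (j + 1)) :
    ∀ b ∈ headBlocks u al k, ∃ a ∈ b.2, a ∉ b.1 := by
  simp only [headBlocks, mem_append, mem_map, mem_range]
  rintro b (hb | ⟨j, hj, rfl⟩)
  · split_ifs at hb with h0
    · simp at hb
    · obtain rfl := mem_singleton.mp hb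
      simpa using exists_mem_of_ne_nil _ h0
  · exact h j hj

lemma exists_mem_not_mem_of_mem_tailBlocks {i n : ℕ}
    (h : ∀ j < n - i, ∃ x ∈ u (i + j), x ∉ al (i + j + 1)) :
    ∀ b ∈ tailBlocks u al i n, ∃ a ∈ b.1, a ∉ b.2 := by
  simp only [tailBlocks, mem_append, mem_map, mem_range]
  rintro b (⟨j, hj, rfl⟩ | hb)
  · exact h j hj
  · split_ifs at hb with hn
    · simp at hb
    · obtain rfl := mem_singleton.mp hb
      simpa using exists_mem_of_ne_nil _ hn

end Blocks

theorem stmt_16_general {α : Type*} (n : ℕ)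
    (u : ℕ → List α) (A : ℕ → Set α)
    (hu : ∀ i, 1 ≤ i → i ≤ n - 1 →
      u i ≠ [] ∧ (∃ x ∈ u i, x ∉ A i) ∧ (∃ x ∈ u i, x ∉ A (i + 1)))
    (al : ℕ → List α) (hal : ∀ i, 1 ≤ i → i ≤ n → ∀ x ∈ al i, x ∈ A i)
    (w : List α)
    (hw : w = u 0 ++ (List.range n).flatMap fun j => al (j + 1) ++ u (j + 1)) :
    ∀ i, 1 ≤ i → i ≤ n → ∀ c ∉ A i,
      w ∉ chainConc
        ((((if u 0 = [] then [] else [u 0]) ++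
            ((List.range (i - 1)).map fun j => u (j + 1)) ++ [[c]] ++
            ((List.range (n - i)).map fun j => u (i + j)) ++
            (if u n = [] then [] else [u n])).map fun x => cc x 2)) := by
  intro i hi hin c hc hmem
  have hchain : ((if u 0 = [] then [] else [u 0]) ++
      ((range (i - 1)).map fun j => u (j + 1)) ++ [[c]] ++
      ((range (n - i)).map fun j => u (i + j)) ++
      (if u n = [] then [] else [u n])).map (fun x => cc x 2) =
      (headBlocks u al (i - 1)).map (fun b => cc b.2 2) ++
        cc [c] 2 :: (tailBlocks u al i n).map (fun b => cc b.1 2) := by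
    unfold headBlocks tailBlocks
    split_ifs <;> simp [Function.comp_def]
  rw [hchain, hw, append_flatMap_range_eq u al hi hin, ← flatMap_headBlocks,
    ← flatMap_tailBlocks] at hmem
  refine hc (hal i hi hin c (mem_of_mem_chainConc_append_cons_append le_rfl ?_ ?_ hmem))
  · refine exists_mem_not_mem_of_mem_headBlocks fun j hj => ?_
    exact (hu (j + 1) (by omega) (by omega)).2.1.imp
      fun x ⟨hx, hxA⟩ => ⟨hx, fun h => hxA (hal (j + 1) (by omega) (by omega) x h)⟩
  · refine exists_mem_not_mem_of_mem_tailBlocks fun j hj => ?_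
    exact (hu (i + j) (by omega) (by omega)).2.2.imp
      fun x ⟨hx, hxA⟩ => ⟨hx, fun h => hxA (hal (i + j + 1) (by omega) (by omega) x h)⟩

theorem stmt_16 {α : Type*} [DecidableEq α] (n : ℕ) (hn : 2 ≤ n)
    (u : ℕ → List α) (A : ℕ → Set α)
    (hA : ∀ i, 1 ≤ i → i ≤ n → (A i).Nonempty)
    (hu : ∀ i, 1 ≤ i → i ≤ n - 1 →
      u i ≠ [] ∧ (∃ x ∈ u i, x ∉ A i) ∧ (∃ x ∈ u i, x ∉ A (i + 1)))
    (al : ℕ → List α) (hal : ∀ i, 1 ≤ i → i ≤ n → ∀ x ∈ al i, x ∈ A i)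
    (w : List α)
    (hw : w = u 0 ++ (List.range n).flatMap fun j => al (j + 1) ++ u (j + 1)) :
    ∀ i, 1 ≤ i → i ≤ n → ∀ c ∉ A i,
      w ∉ chainConc
        ((((if u 0 = [] then [] else [u 0]) ++
            ((List.range (i - 1)).map fun j => u (j + 1)) ++ [[c]] ++
            ((List.range (n - i)).map fun j => u (i + j)) ++
            (if u n = [] then [] else [u n])).map fun x => cc x 2)) :=
  stmt_16_general n u A hu al hal w hw
end

section
/- For every k ≥ 0 and every d with 0 ≤ d ≤ ⌈k/2⌉ − 1, the inclusion P(J_k, n^d) ⊆ P(J_k, n^{d+1}) is strict, where P(V, s(n)) denotes the class of languages over {0,1} recognised by sequences of programs over monoids in the variety V of length at most a constant times s(n). Concretely, for every j ≥ 1 and every finite monoid M of order at most j, there exist n ≥ 1 and a k-selector σ over n such that no program over M on {0,1}^{(k+1)n} of length at most j·((k+1)n)^k recognises K_{n,σ}. -/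
/-!
A counting argument. A program of length at most `L` over `M` on `{0,1}^m` is determined, as far
as the language it recognises goes, by at most `L` instructions and an accepting set, so at most
`(m |M|² + 1)^L · 2^|M|` languages are recognised by such programs. On the other hand
`σ ↦ K_{n,σ}` is injective (the word with `1`s at `ρ` and at `j` lies in `K_{n,σ}` iff
`j ∈ σ ρ`), and there are `2^(n^(k+1))` `k`-selectors over `n`. For `m = (k+1) n` and
`L = j m^k` the first count is only `2^(O(n^k log n))`, so for large `n` some selector is missed.
-/

/-- The flat position of the `j`-th letter of the `i`-th block of `n` letters
in a word of length `(k+1)·n`. -/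
def blockPos (k n : ℕ) (i : Fin (k + 1)) (j : Fin n) : Fin ((k + 1) * n) :=
  ⟨i.val * n + j.val, by
    have hj := j.isLt
    have hi : i.val + 1 ≤ k + 1 := i.isLt
    have h1 : i.val * n + j.val < (i.val + 1) * n := by
      have : (i.val + 1) * n = i.val * n + n := by ring
      omega
    have h2 : (i.val + 1) * n ≤ (k + 1) * n := Nat.mul_le_mul_right n hi
    omega⟩

/-- The language `K_{n,σ}` of words over `{0,1}` of length `(k+1)·n` whose first `k`
blocks of `n` letters each contain `1` exactly once, at positions forming the vector `ρ`,
and whose last block carries a `1` at some position in `σ ρ`. -/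
def KselFlat (k n : ℕ) (σ : (Fin k → Fin n) → Set (Fin n)) :
    Set (Fin ((k + 1) * n) → Bool) :=
  {w | ∃ ρ : Fin k → Fin n,
    (∀ (i : Fin k) (j : Fin n), w (blockPos k n i.castSucc j) = true ↔ j = ρ i) ∧
    ∃ j ∈ σ ρ, w (blockPos k n (Fin.last k) j) = true}

/-- A program over a monoid `M` on `{0,1}^m` is a list of instructions `(p, f)`;
it evaluates on input `w` to the ordered product of the `f (w p)`. -/
def evalProg {m : ℕ} {M : Type*} [Monoid M]
    (P : List (Fin m × (Bool → M))) (w : Fin m → Bool) : M :=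
  (P.map (fun ins => ins.2 (w ins.1))).prod


theorem blockPos_inj {k n : ℕ} {i i' : Fin (k + 1)} {j j' : Fin n} :
    blockPos k n i j = blockPos k n i' j' ↔ i = i' ∧ j = j' := by
  refine ⟨fun h => ?_, fun ⟨hi, hj⟩ => hi ▸ hj ▸ rfl⟩
  have h' : j.val + n * i.val = j'.val + n * i'.val := by
    have := congrArg Fin.val h
    simp only [blockPos] at this
    linarith
  have hi : i.val = i'.val := by
    simpa [Nat.add_mul_div_left _ _ j.pos, Nat.div_eq_of_lt j.isLt,
      Nat.div_eq_of_lt j'.isLt] using congrArg (· / n) h'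
  refine ⟨Fin.ext hi, Fin.ext ?_⟩
  rw [hi] at h'
  omega

open Classical in
noncomputable def selectorWord (k n : ℕ) (ρ : Fin k → Fin n) (j : Fin n) :
    Fin ((k + 1) * n) → Bool :=
  fun p => decide (p = blockPos k n (Fin.last k) j ∨
    ∃ i : Fin k, p = blockPos k n i.castSucc (ρ i))

theorem selectorWord_blockPos_castSucc {k n : ℕ} (ρ : Fin k → Fin n) (j : Fin n) (i : Fin k)
    (j' : Fin n) : selectorWord k n ρ j (blockPos k n i.castSucc j') = true ↔ j' = ρ i := by
  simp only [selectorWord, decide_eq_true_eq, blockPos_inj, (Fin.castSucc_lt_last i).ne,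
    false_and, false_or, Fin.castSucc_inj]
  exact ⟨fun ⟨_, hi, hj⟩ => hi ▸ hj, fun h => ⟨i, rfl, h⟩⟩

theorem selectorWord_blockPos_last {k n : ℕ} (ρ : Fin k → Fin n) (j j' : Fin n) :
    selectorWord k n ρ j (blockPos k n (Fin.last k) j') = true ↔ j' = j := by
  simp only [selectorWord, decide_eq_true_eq, blockPos_inj, true_and]
  exact or_iff_left fun ⟨i, hi, _⟩ => (Fin.castSucc_lt_last i).ne' hi

theorem selectorWord_mem_KselFlat {k n : ℕ} {σ : (Fin k → Fin n) → Set (Fin n)}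
    {ρ : Fin k → Fin n} {j : Fin n} :
    selectorWord k n ρ j ∈ KselFlat k n σ ↔ j ∈ σ ρ := by
  constructor
  · rintro ⟨ρ', hρ', j', hj', hlast⟩
    have : ρ' = ρ := funext fun i =>
      ((hρ' i (ρ i)).mp ((selectorWord_blockPos_castSucc ρ j i (ρ i)).mpr rfl)).symm
    rwa [this, (selectorWord_blockPos_last ρ j j').mp hlast] at hj'
  · exact fun hj => ⟨ρ, selectorWord_blockPos_castSucc ρ j, j, hj,
      (selectorWord_blockPos_last ρ j j).mpr rfl⟩

theorem KselFlat_injective (k n : ℕ) : Function.Injective (KselFlat k n) := by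
  intro σ₁ σ₂ h
  funext ρ
  ext j
  rw [← selectorWord_mem_KselFlat, ← selectorWord_mem_KselFlat, h]

theorem List.card_length_le_le {α : Type*} [Finite α] (L : ℕ) :
    Nat.card {l : List α // l.length ≤ L} ≤ (Nat.card α + 1) ^ L := by
  have hinj : Function.Injective
      fun l : {l : List α // l.length ≤ L} => fun i : Fin L => l.1[i.1]? := by
    intro l₁ l₂ h
    refine Subtype.ext (List.ext_getElem? fun i => ?_)
    by_cases hi : i < L
    · exact congrFun h ⟨i, hi⟩
    · rw [List.getElem?_eq_none (by have := l₁.2; omega),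
        List.getElem?_eq_none (by have := l₂.2; omega)]
  simpa only [Nat.card_fun, Finite.card_option, Nat.card_fin] using
    Nat.card_le_card_of_injective _ hinj

def programLanguages (m : ℕ) (M : Type*) [Monoid M] (L : ℕ) : Set (Set (Fin m → Bool)) :=
  {K | ∃ P : List (Fin m × (Bool → M)), P.length ≤ L ∧
    ∃ F : Set M, K = {w | evalProg P w ∈ F}}

theorem card_programLanguages_le (m : ℕ) (M : Type*) [Monoid M] [Finite M] (L : ℕ) :
    Nat.card (programLanguages m M L) ≤ (m * Nat.card M ^ 2 + 1) ^ L * 2 ^ Nat.card M := by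
  let Prog := {P : List (Fin m × (Bool → M)) // P.length ≤ L}
  have : Finite Prog := (List.finite_length_le _ L).to_subtype
  have hsurj : Function.Surjective fun PF : Prog × Set M =>
      (⟨{w | evalProg PF.1.1 w ∈ PF.2}, PF.1, PF.1.2, PF.2, rfl⟩ :
        programLanguages m M L) := by
    rintro ⟨K, P, hP, F, rfl⟩
    exact ⟨(⟨P, hP⟩, F), rfl⟩
  calc Nat.card (programLanguages m M L) ≤ Nat.card Prog * Nat.card (Set M) := by
        simpa only [Nat.card_prod] using Nat.card_le_card_of_surjective _ hsurj
    _ ≤ (m * Nat.card M ^ 2 + 1) ^ L * 2 ^ Nat.card M := by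
        gcongr
        · simpa [Nat.card_fun, mul_comm] using
            List.card_length_le_le (α := Fin m × (Bool → M)) L
        · simp [Set, Nat.card_fun]

theorem exists_pow_mul_lt_two_pow (a b C k : ℕ) :
    ∃ n, 1 ≤ n ∧ (a * n + 1) ^ (C * n ^ k) * 2 ^ b < 2 ^ (n * n ^ k) := by
  -- For `n = 2 ^ (2 s)` the left side is at most `2 ^ (3 s C n ^ k + b)`,
  -- and `3 s C + b ≤ s * s < n`.
  set s := a + b + 3 * C + 1 with hs
  refine ⟨2 ^ (2 * s), Nat.one_le_two_pow, ?_⟩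
  set n := 2 ^ (2 * s) with hn
  have hbase : a * n + 1 ≤ 2 ^ (s + 2 * s) := by
    have ha : a + 1 < 2 ^ s := by have := @Nat.lt_two_pow_self s; omega
    have hn1 : 1 ≤ n := Nat.one_le_two_pow
    calc a * n + 1 ≤ (a + 1) * n := by rw [add_one_mul]; omega
      _ ≤ 2 ^ s * n := Nat.mul_le_mul_right _ ha.le
      _ = 2 ^ (s + 2 * s) := (pow_add _ _ _).symm
  have hlin : (s + 2 * s) * C + b < n := by
    have hss : s * s < n := by
      rw [hn, two_mul, pow_add]
      exact Nat.mul_self_lt_mul_self Nat.lt_two_pow_self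
    nlinarith
  have hexp : (s + 2 * s) * (C * n ^ k) + b < n * n ^ k := by
    have hpos : 0 < n ^ k := by positivity
    nlinarith
  calc (a * n + 1) ^ (C * n ^ k) * 2 ^ b
      ≤ (2 ^ (s + 2 * s)) ^ (C * n ^ k) * 2 ^ b := by gcongr
    _ = 2 ^ ((s + 2 * s) * (C * n ^ k) + b) := by rw [← pow_mul, ← pow_add]
    _ < 2 ^ (n * n ^ k) := Nat.pow_lt_pow_right (by norm_num) hexp

theorem stmt_18_general (k : ℕ) (j : ℕ) (M : Type*) [Monoid M] [Fintype M] :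
    ∃ n, 1 ≤ n ∧ ∃ σ : (Fin k → Fin n) → Set (Fin n),
      ∀ P : List (Fin ((k + 1) * n) × (Bool → M)),
        P.length ≤ j * ((k + 1) * n) ^ k →
        ∀ F : Set M, KselFlat k n σ ≠ {w | evalProg P w ∈ F} := by
  obtain ⟨n, hn, hcount⟩ :=
    exists_pow_mul_lt_two_pow ((k + 1) * Nat.card M ^ 2) (Nat.card M) (j * (k + 1) ^ k) k
  refine ⟨n, hn, ?_⟩
  by_contra! hall
  have hsub : Set.range (KselFlat k n) ⊆ programLanguages _ M (j * ((k + 1) * n) ^ k) := by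
    rintro _ ⟨σ, rfl⟩
    exact hall σ
  have hle : 2 ^ (n * n ^ k) ≤
      ((k + 1) * Nat.card M ^ 2 * n + 1) ^ (j * (k + 1) ^ k * n ^ k) * 2 ^ Nat.card M :=
    calc 2 ^ (n * n ^ k) = Nat.card ((Fin k → Fin n) → Set (Fin n)) := by
          simp [Set, pow_mul]
      _ = Nat.card (Set.range (KselFlat k n)) :=
          (Nat.card_range_of_injective (KselFlat_injective k n)).symm
      _ ≤ Nat.card (programLanguages _ M (j * ((k + 1) * n) ^ k)) :=
          Nat.card_mono (Set.toFinite _) hsub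
      _ ≤ ((k + 1) * n * Nat.card M ^ 2 + 1) ^ (j * ((k + 1) * n) ^ k) * 2 ^ Nat.card M :=
          card_programLanguages_le _ M _
      _ = ((k + 1) * Nat.card M ^ 2 * n + 1) ^ (j * (k + 1) ^ k * n ^ k) * 2 ^ Nat.card M := by
          rw [mul_pow]; ring
  exact hle.not_gt hcount

theorem stmt_18 (k : ℕ) (j : ℕ) (hj : 1 ≤ j) (M : Type*) [Monoid M] [Fintype M]
    (hM : Fintype.card M ≤ j) :
    ∃ n, 1 ≤ n ∧ ∃ σ : (Fin k → Fin n) → Set (Fin n),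
      ∀ P : List (Fin ((k + 1) * n) × (Bool → M)),
        P.length ≤ j * ((k + 1) * n) ^ k →
        ∀ F : Set M, KselFlat k n σ ≠ {w | evalProg P w ∈ F} :=
  stmt_18_general k j M
end
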